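/- arXiv:2104.07273 — 3 statements merged into one kernel-verified Lean document; each statement's English description precedes it below -/
import Mathlib

section
/- For two compositions α, β ∈ C(s,n), the earth mover's distance between α and β equals the cardinality of the symmetric difference of their associated Young diagrams (viewed as subsets of the s × (n-1) grid). -/
/-- The word of a composition `α = (α 0, …, α (n-1))`: the weakly increasing list
containing each value `i ∈ {0,…,n-1}` with multiplicity `α i`. -/
def word (n : ℕ) (α : ℕ → ℕ) : List ℕ :=
  ((Finset.range n).sum fun i => Multiset.replicate (α i) i).sort (· ≤ ·)

/-- The earth mover's distance between two compositions of `s`: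
`∑_{j=1}^s |w(α)_j - w(β)_j|` (equivalently, the minimal cost of a transport plan). -/
def emd (s n : ℕ) (α β : ℕ → ℕ) : ℕ :=
  ∑ j ∈ Finset.range s, (((word n α).getD j 0 : ℤ) - ((word n β).getD j 0 : ℤ)).natAbs

/-- The Young diagram of a composition, as a subset of the `s × (n-1)` grid:
the cell `(j, c)` (0-based) lies in the diagram iff `c < w(α)_j`. -/
def diagram (s n : ℕ) (α : ℕ → ℕ) : Finset (ℕ × ℕ) :=
  (Finset.range s ×ˢ Finset.range (n - 1)).filter fun p => p.2 < (word n α).getD p.1 0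

/-!
Row `j` of the diagram of `α` is the interval `[0, w(α)_j)`, and every entry of the word is at
most `n - 1`, so the rows fit in the grid. Rows of lengths `a` and `b` differ exactly in the
cells of `[min a b, max a b)`, which has `|a - b|` elements; summing over the rows gives the
earth mover's distance.
-/

open Finset

theorem Finset.filter_symmDiff_filter {ι : Type*} [DecidableEq ι] (s : Finset ι) (p q : ι → Prop)
    [DecidablePred p] [DecidablePred q] :
    symmDiff (s.filter p) (s.filter q) = s.filter fun x => ¬(p x ↔ q x) := by
  ext x
  simp only [mem_symmDiff, mem_filter]
  tauto

theorem card_filter_range_not_lt_iff_lt {m a b : ℕ} (ha : a ≤ m) (hb : b ≤ m) :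
    #{c ∈ range m | ¬(c < a ↔ c < b)} = ((a : ℤ) - b).natAbs := by
  have hIco : {c ∈ range m | ¬(c < a ↔ c < b)} = Ico (min a b) (max a b) := by
    ext c
    simp only [mem_filter, mem_range, mem_Ico]
    omega
  rw [hIco, Nat.card_Ico]
  omega

theorem length_word (n : ℕ) (α : ℕ → ℕ) : (word n α).length = ∑ i ∈ range n, α i := by
  simp [word]

theorem lt_of_mem_word {n : ℕ} {α : ℕ → ℕ} {x : ℕ} (hx : x ∈ word n α) : x < n := by
  rw [word, Multiset.mem_sort, Multiset.mem_sum] at hx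
  obtain ⟨i, hi, hxi⟩ := hx
  rw [Multiset.eq_of_mem_replicate hxi]
  exact mem_range.mp hi

theorem getD_word_lt {n : ℕ} {α : ℕ → ℕ} {j : ℕ} (hj : j < ∑ i ∈ range n, α i) :
    (word n α).getD j 0 < n := by
  rw [← length_word] at hj
  rw [List.getD_eq_getElem _ _ hj]
  exact lt_of_mem_word (List.getElem_mem hj)

/-- The earth mover's distance between two compositions `α, β ∈ C(s,n)` equals the
cardinality of the symmetric difference of their Young diagrams. -/
theorem emd_eq_card_symmDiff (s n : ℕ) (α β : ℕ → ℕ)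
    (hα : ∑ i ∈ Finset.range n, α i = s) (hβ : ∑ i ∈ Finset.range n, β i = s) :
    emd s n α β = (symmDiff (diagram s n α) (diagram s n β)).card := by
  rw [diagram, diagram, filter_symmDiff_filter, card_filter, sum_product, emd]
  refine sum_congr rfl fun j hj => ?_
  rw [mem_range] at hj
  have ha : (word n α).getD j 0 < n := getD_word_lt (by omega)
  have hb : (word n β).getD j 0 < n := getD_word_lt (by omega)
  rw [← card_filter]
  exact (card_filter_range_not_lt_iff_lt (by omega) (by omega)).symm
end

section
/- For compositions α_1,...,α_d ∈ C(s,n), the earth mover's coefficient EMC(α_1,...,α_d) = Σ_{j=1}^s C(w(α_1)_j, ..., w(α_d)_j), where C(x) is the taxicab distance from x to the diagonal, equals the unimodal symmetric difference ▲(α_1,...,α_d) of their Young diagrams. -/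
/-- `cost d x`: the taxicab distance from `(x 0, …, x (d-1))` to the diagonal,
i.e. the minimum over `t : ℤ` of `∑ i, |x i - t|`. -/
noncomputable def cost (d : ℕ) (x : ℕ → ℤ) : ℕ :=
  sInf {c : ℕ | ∃ t : ℤ, (c : ℤ) = ∑ i ∈ Finset.range d, |x i - t|}

/-- The earth mover's coefficient of `d` compositions:
`∑_{j=1}^s C(w(α_1)_j, …, w(α_d)_j)`. -/
noncomputable def emc (s n d : ℕ) (α : ℕ → ℕ → ℕ) : ℕ :=
  ∑ j ∈ Finset.range s, cost d fun i => ((word n (α i)).getD j 0 : ℤ)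

/-- The unimodal symmetric difference
`▲(A 0, …, A (d-1)) = ∑_{k=1}^{d-1} min(k, d-k) · #{elements in exactly k of the A_i}`. -/
def usd {γ : Type} [DecidableEq γ] (d : ℕ) (A : ℕ → Finset γ) : ℕ :=
  ∑ k ∈ Finset.range (d - 1),
    min (k + 1) (d - (k + 1)) *
      (((Finset.range d).biUnion A).filter
        (fun x => ((Finset.range d).filter (fun i => x ∈ A i)).card = k + 1)).card

/-!
Both sides are sums over the cells `(j, c)` of the `s × (n-1)` grid. Fix a row `j`, put
`x_i = w(α_i)_j` and let `K_c = #{i | c < x_i}` be the number of diagrams containing `(j, c)`.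
Counting `|x_i - t|` column by column gives
`∑_i |x_i - t| = ∑_c (if c < t then d - K_c else K_c) ≥ ∑_c min(K_c, d - K_c)`,
and since `K` is antitone, equality holds for `t` the first column with `2 K_c ≤ d`
(a median of the `x_i`). So the cost of row `j` is `∑_c min(K_c, d - K_c)`, and grouping
all cells by the number `k` of diagrams containing them gives `▲`.
-/

open Finset

lemma abs_sub_eq_card_filter {m a b : ℕ} (ha : a ≤ m) (hb : b ≤ m) :
    |(a : ℤ) - b| = #{c ∈ range m | ¬(c < a ↔ c < b)} := by
  have h : {c ∈ range m | ¬(c < a ↔ c < b)} = Ico (min a b) (max a b) := by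
    ext c
    simp only [mem_filter, mem_range, mem_Ico]
    omega
  rw [h, Nat.card_Ico, Nat.cast_sub min_le_max, Nat.cast_max, Nat.cast_min, max_sub_min_eq_abs']

lemma card_filter_not_iff {ι : Type*} (s : Finset ι) (q : ι → Prop) [DecidablePred q]
    (P : Prop) [Decidable P] :
    #{i ∈ s | ¬(q i ↔ P)} = if P then #s - #{i ∈ s | q i} else #{i ∈ s | q i} := by
  split_ifs with hP
  · classical
    simp only [hP, iff_true]
    rw [filter_not, card_sdiff_of_subset (filter_subset _ _)]
  · simp [hP]

lemma sum_abs_sub_eq_sum_card {d m t : ℕ} {x : ℕ → ℕ} (hx : ∀ i < d, x i ≤ m) (ht : t ≤ m) :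
    ∑ i ∈ range d, |(x i : ℤ) - t| =
      ∑ c ∈ range m, (#{i ∈ range d | ¬(c < x i ↔ c < t)} : ℤ) := by
  rw [sum_congr rfl fun i hi => abs_sub_eq_card_filter (hx i (mem_range.mp hi)) ht]
  simp only [card_filter, Nat.cast_sum]
  exact sum_comm

lemma sum_min_le_sum_abs_sub {d m t : ℕ} {x : ℕ → ℕ} (hx : ∀ i < d, x i ≤ m) (ht : t ≤ m) :
    ((∑ c ∈ range m, min #{i ∈ range d | c < x i} (d - #{i ∈ range d | c < x i}) : ℕ) : ℤ) ≤
      ∑ i ∈ range d, |(x i : ℤ) - t| := by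
  rw [sum_abs_sub_eq_sum_card hx ht, Nat.cast_sum]
  gcongr with c
  rw [card_filter_not_iff, card_range]
  split_ifs <;> simp

lemma card_filter_lt_antitone (d : ℕ) (x : ℕ → ℕ) :
    Antitone fun c => #{i ∈ range d | c < x i} :=
  fun _ _ h => card_le_card <| monotone_filter_right _ fun _ _ hi => h.trans_lt hi

lemma cost_eq_sum_min {d m : ℕ} {x : ℕ → ℕ} (hx : ∀ i < d, x i ≤ m) :
    cost d (fun i => (x i : ℤ)) =
      ∑ c ∈ range m, min #{i ∈ range d | c < x i} (d - #{i ∈ range d | c < x i}) := by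
  apply IsLeast.csInf_eq
  constructor
  · have hm : #{i ∈ range d | m < x i} = 0 :=
      card_eq_zero.mpr <| filter_eq_empty_iff.mpr fun i hi => (hx i (mem_range.mp hi)).not_gt
    have hex : ∃ t, 2 * #{i ∈ range d | t < x i} ≤ d := ⟨m, by simp [hm]⟩
    have ht₀ : Nat.find hex ≤ m := Nat.find_min' hex (by simp [hm])
    refine ⟨Nat.find hex, ?_⟩
    rw [sum_abs_sub_eq_sum_card hx ht₀, ← Nat.cast_sum, Nat.cast_inj]
    refine sum_congr rfl fun c _ => ?_
    rw [card_filter_not_iff, card_range]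
    split_ifs with h
    · have := Nat.find_min hex h
      omega
    · have : #{i ∈ range d | c < x i} ≤ #{i ∈ range d | Nat.find hex < x i} :=
        card_filter_lt_antitone d x (le_of_not_gt h)
      have : 2 * #{i ∈ range d | Nat.find hex < x i} ≤ d := Nat.find_spec hex
      omega
  · rintro c ⟨t, hc⟩
    -- clamping `t` into `[0, m]` moves it closer to every `x i`
    have hclamp : ∑ i ∈ range d, |(x i : ℤ) - (min t.toNat m : ℕ)| ≤
        ∑ i ∈ range d, |(x i : ℤ) - t| :=
      sum_le_sum fun i hi => by
        have := hx i (mem_range.mp hi)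
        rcases abs_cases ((x i : ℤ) - t) with ⟨h1, h2⟩ | ⟨h1, h2⟩ <;>
          rcases abs_cases ((x i : ℤ) - (min t.toNat m : ℕ)) with ⟨h3, h4⟩ | ⟨h3, h4⟩ <;>
          omega
    exact_mod_cast (sum_min_le_sum_abs_sub hx (min_le_right _ m)).trans (hclamp.trans hc.ge)

lemma sum_min_eq_sum_mul_card {ι : Type*} (s : Finset ι) {d : ℕ} {K : ι → ℕ}
    (hK : ∀ x ∈ s, K x ≤ d) :
    ∑ x ∈ s, min (K x) (d - K x) =
      ∑ k ∈ range (d - 1), min (k + 1) (d - (k + 1)) * #{x ∈ s | K x = k + 1} := by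
  rw [← sum_fiberwise_of_maps_to' (t := range (d + 1))
    (fun x hx => mem_range.mpr (Nat.lt_succ_of_le (hK x hx))) fun v => min v (d - v)]
  simp only [sum_const, smul_eq_mul, mul_comm]
  rcases d with _ | d
  · simp
  · rw [sum_range_succ', sum_range_succ]
    simp

lemma usd_eq_sum_min {γ : Type} [DecidableEq γ] {d : ℕ} {A : ℕ → Finset γ} {G : Finset γ}
    (hA : ∀ i < d, A i ⊆ G) :
    usd d A = ∑ x ∈ G, min #{i ∈ range d | x ∈ A i} (d - #{i ∈ range d | x ∈ A i}) := by
  rw [sum_min_eq_sum_mul_card G fun x _ => (card_filter_le _ _).trans (card_range d).le, usd]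
  refine sum_congr rfl fun k _ => congrArg _ (congrArg card ?_)
  ext x
  simp only [mem_filter, mem_biUnion, and_congr_left_iff]
  intro hx
  constructor
  · rintro ⟨i, hi, hxi⟩
    exact hA i (mem_range.mp hi) hxi
  · intro
    obtain ⟨i, hi⟩ := card_pos.mp (by rw [hx]; exact k.succ_pos)
    exact ⟨i, (mem_filter.mp hi).1, (mem_filter.mp hi).2⟩

lemma lt_of_mem_word_s6 {n : ℕ} {β : ℕ → ℕ} {a : ℕ} (h : a ∈ word n β) : a < n := by
  obtain ⟨i, hi, ha⟩ := Multiset.mem_sum.mp ((Multiset.mem_sort _).mp h)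
  rw [Multiset.eq_of_mem_replicate ha]
  exact mem_range.mp hi

lemma word_getD_le (n : ℕ) (β : ℕ → ℕ) (j : ℕ) : (word n β).getD j 0 ≤ n - 1 := by
  rw [List.getD_eq_getElem?_getD]
  cases h : (word n β)[j]? with
  | none => simp
  | some a =>
    have := lt_of_mem_word_s6 (List.mem_of_getElem? h)
    simp only [Option.getD_some]
    omega

lemma mem_diagram {s n : ℕ} {β : ℕ → ℕ} {p : ℕ × ℕ} :
    p ∈ diagram s n β ↔ p.1 < s ∧ p.2 < (word n β).getD p.1 0 := by
  have := word_getD_le n β p.1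
  simp only [diagram, mem_filter, mem_product, mem_range]
  omega

theorem emc_eq_usd_general (s n d : ℕ) (α : ℕ → ℕ → ℕ) :
    emc s n d α = usd d fun i => diagram s n (α i) := by
  rw [usd_eq_sum_min (G := range s ×ˢ range (n - 1)) (A := fun i => diagram s n (α i))
    fun i _ => filter_subset _ _, sum_product, emc]
  refine sum_congr rfl fun j hj => ?_
  rw [cost_eq_sum_min fun i _ => word_getD_le n (α i) j]
  have hrow (c i : ℕ) : (j, c) ∈ diagram s n (α i) ↔ c < (word n (α i)).getD j 0 := by
    simp [mem_diagram, mem_range.mp hj]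
  simp only [hrow]

/-- The earth mover's coefficient of compositions `α_1, …, α_d ∈ C(s,n)` equals the
unimodal symmetric difference of their Young diagrams. -/
theorem emc_eq_usd (s n d : ℕ) (α : ℕ → ℕ → ℕ)
    (hα : ∀ i, i < d → ∑ t ∈ Finset.range n, α i t = s) :
    emc s n d α = usd d fun i => diagram s n (α i) :=
  emc_eq_usd_general s n d α
end

section
/- The number of plane partitions fitting in an x × y × 2 box equals ((x+1)(x+2)⋯(x+y) · (x+2)(x+3)⋯(x+y+1)) / (y!·(y+1)!). -/
/-- `IsPP x y z f`: `f` is a plane partition fitting in an `x × y × z` box, i.e. an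
`x × y` array of entries in `{0,…,z}` (vanishing outside the grid), weakly decreasing
along rows and columns. -/
def IsPP (x y z : ℕ) (f : ℕ → ℕ → ℕ) : Prop :=
  (∀ i j, f i j ≤ z) ∧
  (∀ i j, (x ≤ i ∨ y ≤ j) → f i j = 0) ∧
  (∀ i i' j, i ≤ i' → f i' j ≤ f i j) ∧
  (∀ i j j', j ≤ j' → f i j' ≤ f i j)

/-!
A plane partition with entries at most `2` is the union of two nested layers `{f ≥ 1} ⊇ {f ≥ 2}`,
that is, a pair `μ ⊆ λ` of partitions with at most `x` parts. Counting such pairs with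
`λ₀ ≤ s` and `μ₀ ≤ t` by their first parts gives a recursion in `x`, which is solved (for `t ≤ s`)
by the `2 × 2` Lindström–Gessel–Viennot determinant
`C(x+s, x) C(x+t, x) - C(x+s, s+1) C(x+t, x+1)` of binomial path counts.
At `s = t = y` this determinant equals `C(x+y, y) C(x+y+1, y) / (y+1)`, the product formula.
-/

open Finset

structure IsNestedPair (x s t : ℕ) (p : (ℕ → ℕ) × (ℕ → ℕ)) : Prop where
  antitone_fst : Antitone p.1
  antitone_snd : Antitone p.2
  snd_le_fst : p.2 ≤ p.1
  fst_zero_le : p.1 0 ≤ s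
  snd_zero_le : p.2 0 ≤ t
  fst_eq_zero : ∀ i, x ≤ i → p.1 i = 0

abbrev NestedPairs (x s t : ℕ) : Type := {p // IsNestedPair x s t p}

lemma lt_sInf_setOf_lt_iff {r : ℕ → ℕ} (hr : Antitone r) {k : ℕ} (hk : ∃ j, r j < k) (j : ℕ) :
    j < sInf {j | r j < k} ↔ k ≤ r j := by
  refine ⟨fun h => not_lt.mp (Nat.notMem_of_lt_sInf (s := {j | r j < k}) h), fun h => ?_⟩
  by_contra! hle
  exact (hr hle).not_gt (h.trans_lt' (Nat.sInf_mem hk))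

-- The length of row `i` of the layer `{f ≥ k}`, when the rows of `f` are antitone.
noncomputable def level (f : ℕ → ℕ → ℕ) (k i : ℕ) : ℕ := sInf {j | f i j < k}

def layers (p : (ℕ → ℕ) × (ℕ → ℕ)) (i j : ℕ) : ℕ :=
  (if j < p.1 i then 1 else 0) + (if j < p.2 i then 1 else 0)

section

variable {x y z : ℕ} {f : ℕ → ℕ → ℕ}

lemma IsPP.lt_level_iff (hf : IsPP x y z f) {k : ℕ} (hk : 0 < k) (i j : ℕ) :
    j < level f k i ↔ k ≤ f i j :=
  lt_sInf_setOf_lt_iff (fun _ _ h => hf.2.2.2 i _ _ h) ⟨y, by rwa [hf.2.1 i y (Or.inr le_rfl)]⟩ j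

lemma IsPP.level_le (hf : IsPP x y z f) {k : ℕ} (hk : 0 < k) {i n : ℕ}
    (h : ∀ j, k ≤ f i j → j < n) : level f k i ≤ n :=
  le_of_forall_lt fun j hj => h j ((hf.lt_level_iff hk i j).mp hj)

lemma IsPP.isNestedPair_level (hf : IsPP x y 2 f) : IsNestedPair x y y (level f 1, level f 2) := by
  obtain ⟨-, hzero, hcol, -⟩ := id hf
  have hrow (k : ℕ) (hk : 0 < k) (j : ℕ) (hj : k ≤ f 0 j) : j < y := by
    by_contra! h
    rw [hzero 0 j (Or.inr h)] at hj
    omega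
  refine ⟨fun i i' h => hf.level_le one_pos fun j hj => (hf.lt_level_iff one_pos i j).mpr ?_,
    fun i i' h => hf.level_le two_pos fun j hj => (hf.lt_level_iff two_pos i j).mpr ?_,
    fun i => hf.level_le two_pos fun j hj => (hf.lt_level_iff one_pos i j).mpr ?_,
    hf.level_le one_pos (hrow 1 one_pos), hf.level_le two_pos (hrow 2 two_pos),
    fun i hi => Nat.le_zero.mp (hf.level_le one_pos fun j hj => ?_)⟩
  · exact hj.trans (hcol i i' j h)
  · exact hj.trans (hcol i i' j h)
  · omega
  · simp [hzero i j (Or.inl hi)] at hj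

lemma IsPP.layers_level (hf : IsPP x y 2 f) : layers (level f 1, level f 2) = f := by
  funext i j
  have h₁ := hf.lt_level_iff one_pos i j
  have h₂ := hf.lt_level_iff two_pos i j
  have h₃ := hf.1 i j
  simp only [layers]
  split_ifs <;> omega

end

lemma IsNestedPair.isPP_layers {x y : ℕ} {p : (ℕ → ℕ) × (ℕ → ℕ)} (hp : IsNestedPair x y y p) :
    IsPP x y 2 (layers p) := by
  have hle (i : ℕ) : p.1 i ≤ y := (hp.antitone_fst (Nat.zero_le i)).trans hp.fst_zero_le
  refine ⟨fun i j => ?_, fun i j h => ?_, fun i i' j h => ?_, fun i j j' h => ?_⟩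
  · simp only [layers]; split_ifs <;> omega
  · have : p.2 i ≤ p.1 i := hp.snd_le_fst i
    rcases h with h | h
    · have := hp.fst_eq_zero i h
      simp only [layers]; split_ifs <;> omega
    · have := hle i
      simp only [layers]; split_ifs <;> omega
  · have := hp.antitone_fst h
    have := hp.antitone_snd h
    simp only [layers]; split_ifs <;> omega
  · simp only [layers]; split_ifs <;> omega

lemma level_layers {p : (ℕ → ℕ) × (ℕ → ℕ)} (hp : p.2 ≤ p.1) :
    (level (layers p) 1, level (layers p) 2) = p := by
  have hlevel (k i n : ℕ) (h : {j | layers p i j < k} = Set.Ici n) : level (layers p) k i = n := by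
    rw [level, h, csInf_Ici]
  refine Prod.ext (funext fun i => hlevel 1 i _ ?_) (funext fun i => hlevel 2 i _ ?_) <;>
  · ext j
    have : p.2 i ≤ p.1 i := hp i
    simp only [Set.mem_ofPred_eq, Set.mem_Ici, layers]
    split_ifs <;> omega

noncomputable def planePartitionEquiv (x y : ℕ) : {f // IsPP x y 2 f} ≃ NestedPairs x y y where
  toFun f := ⟨(level f.1 1, level f.1 2), f.2.isNestedPair_level⟩
  invFun p := ⟨layers p.1, p.2.isPP_layers⟩
  left_inv f := Subtype.ext f.2.layers_level
  right_inv p := Subtype.ext (level_layers p.2.snd_le_fst)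

instance (s t : ℕ) : Unique (NestedPairs 0 s t) where
  default :=
    ⟨(0, 0), ⟨antitone_const, antitone_const, le_rfl, Nat.zero_le _, Nat.zero_le _, fun _ _ => rfl⟩⟩
  uniq := fun ⟨p, hp⟩ => by
    have h₁ (i : ℕ) : p.1 i = 0 := hp.fst_eq_zero i (Nat.zero_le i)
    have h₂ (i : ℕ) : p.2 i = 0 := Nat.eq_zero_of_le_zero (h₁ i ▸ hp.snd_le_fst i)
    exact Subtype.ext (Prod.ext (funext h₁) (funext h₂))

def consSeq (a : ℕ) (g : ℕ → ℕ) : ℕ → ℕ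
  | 0 => a
  | i + 1 => g i

lemma antitone_consSeq {a : ℕ} {g : ℕ → ℕ} (hg : Antitone g) (h : g 0 ≤ a) :
    Antitone (consSeq a g) :=
  antitone_nat_of_succ_le fun
    | 0 => h
    | i + 1 => hg (Nat.le_succ i)

def nestedPairsSuccEquiv (x s t : ℕ) :
    NestedPairs (x + 1) s t ≃
      Σ u : Fin (s + 1), Σ v : Fin (min (u : ℕ) t + 1), NestedPairs x u v where
  toFun := fun ⟨p, hp⟩ =>
    ⟨⟨p.1 0, Nat.lt_succ_of_le hp.fst_zero_le⟩,
      ⟨p.2 0, Nat.lt_succ_of_le (le_min (hp.snd_le_fst 0) hp.snd_zero_le)⟩,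
      ⟨(fun i => p.1 (i + 1), fun i => p.2 (i + 1)),
        ⟨fun _ _ h => hp.antitone_fst (Nat.succ_le_succ h),
          fun _ _ h => hp.antitone_snd (Nat.succ_le_succ h),
          fun i => hp.snd_le_fst (i + 1), hp.antitone_fst (Nat.zero_le 1),
          hp.antitone_snd (Nat.zero_le 1), fun i hi => hp.fst_eq_zero (i + 1) (by omega)⟩⟩⟩
  invFun := fun ⟨u, v, ⟨q, hq⟩⟩ =>
    ⟨(consSeq u q.1, consSeq v q.2),
      ⟨antitone_consSeq hq.antitone_fst hq.fst_zero_le,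
        antitone_consSeq hq.antitone_snd hq.snd_zero_le,
        fun | 0 => (Nat.lt_succ_iff.mp v.2).trans (min_le_left _ _) | i + 1 => hq.snd_le_fst i,
        Nat.lt_succ_iff.mp u.2, (Nat.lt_succ_iff.mp v.2).trans (min_le_right _ _),
        fun | 0, h => absurd h (by omega) | i + 1, h => hq.fst_eq_zero i (by omega)⟩⟩
  left_inv := fun ⟨p, hp⟩ => by
    refine Subtype.ext (Prod.ext (funext fun i => ?_) (funext fun i => ?_)) <;> cases i <;> rfl
  right_inv := fun ⟨u, v, ⟨q, hq⟩⟩ => rfl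

instance (x s t : ℕ) : Finite (NestedPairs x s t) := by
  induction x generalizing s t with
  | zero => infer_instance
  | succ x ih => exact Finite.of_equiv _ (nestedPairsSuccEquiv x s t).symm

lemma card_nestedPairs_succ (x s t : ℕ) :
    Nat.card (NestedPairs (x + 1) s t)
      = ∑ u ∈ range (s + 1), ∑ v ∈ range (min u t + 1), Nat.card (NestedPairs x u v) := by
  rw [Nat.card_congr (nestedPairsSuccEquiv x s t), Nat.card_sigma,
    ← Fin.sum_univ_eq_sum_range (fun u => ∑ v ∈ range (min u t + 1), Nat.card (NestedPairs x u v))]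
  refine sum_congr rfl fun u _ => ?_
  rw [Nat.card_sigma, Fin.sum_univ_eq_sum_range (fun v => Nat.card (NestedPairs x u v))]

def nestedCount (x s t : ℕ) : ℤ :=
  (x + s).choose x * (x + t).choose x - (x + s).choose (s + 1) * (x + t).choose (x + 1)

lemma nestedCount_zero (s t : ℕ) : nestedCount 0 s t = 1 := by
  simp [nestedCount]

lemma sum_range_choose_add_choose (x k m : ℕ) :
    ∑ v ∈ range m, (x + v).choose k + x.choose (k + 1) = (x + m).choose (k + 1) := by
  induction m with
  | zero => simp
  | succ m ih =>
    rw [sum_range_succ, add_right_comm, ih, ← add_assoc, Nat.choose_succ_succ', add_comm]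

lemma sum_range_nestedCount (x u m : ℕ) :
    ∑ v ∈ range (m + 1), nestedCount x u v
      = (x + u).choose x * (x + m + 1).choose (x + 1)
        - (x + u).choose (u + 1) * (x + m + 1).choose (x + 2) := by
  have hx := sum_range_choose_add_choose x x (m + 1)
  have hx1 := sum_range_choose_add_choose x (x + 1) (m + 1)
  rw [Nat.choose_eq_zero_of_lt (by omega), add_zero] at hx hx1
  simp only [nestedCount, sum_sub_distrib, ← mul_sum, ← Nat.cast_sum, hx, hx1, ← add_assoc]

lemma nestedCount_succ_fst (x s t : ℕ) :
    nestedCount (x + 1) (s + 1) t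
      = nestedCount (x + 1) s t + ∑ v ∈ range (t + 1), nestedCount x (s + 1) v := by
  rw [sum_range_nestedCount]
  simp only [nestedCount, show x + 1 + (s + 1) = (x + s + 1) + 1 by omega,
    show x + (s + 1) = x + s + 1 by omega, show x + 1 + s = x + s + 1 by omega,
    show x + 1 + t = x + t + 1 by omega,
    Nat.choose_succ_succ' (x + s + 1) x, Nat.choose_succ_succ' (x + s + 1) (s + 1)]
  push_cast
  ring

lemma nestedCount_succ_diag (x t : ℕ) :
    nestedCount (x + 1) (t + 1) (t + 1)
      = nestedCount (x + 1) t t + ∑ v ∈ range (t + 2), nestedCount x (t + 1) v := by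
  rw [sum_range_nestedCount]
  have hsymm : (x + t + 1).choose (t + 1) = (x + t + 1).choose x := by
    rw [Nat.choose_symm_of_eq_add]; omega
  simp only [nestedCount, show x + 1 + (t + 1) = (x + t + 1) + 1 by omega,
    show x + (t + 1) = x + t + 1 by omega, show x + 1 + t = x + t + 1 by omega,
    Nat.choose_succ_succ' (x + t + 1) x, Nat.choose_succ_succ' (x + t + 1) (t + 1),
    Nat.choose_succ_succ' (x + t + 1) (x + 1), hsymm]
  push_cast
  ring

lemma sum_sum_nestedCount_diag (x t : ℕ) :
    ∑ u ∈ range (t + 1), ∑ v ∈ range (u + 1), nestedCount x u v = nestedCount (x + 1) t t := by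
  induction t with
  | zero => simp [nestedCount]
  | succ t ih => rw [sum_range_succ, ih, nestedCount_succ_diag]

lemma sum_sum_nestedCount (x s t : ℕ) (hts : t ≤ s) :
    ∑ u ∈ range (s + 1), ∑ v ∈ range (min u t + 1), nestedCount x u v
      = nestedCount (x + 1) s t := by
  induction s, hts using Nat.le_induction with
  | base =>
    rw [← sum_sum_nestedCount_diag]
    refine sum_congr rfl fun u hu => ?_
    rw [min_eq_left (Nat.lt_succ_iff.mp (mem_range.mp hu))]
  | succ s hts ih =>
    rw [sum_range_succ, ih, min_eq_right (by omega), nestedCount_succ_fst]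

lemma card_nestedPairs (x s t : ℕ) (hts : t ≤ s) :
    (Nat.card (NestedPairs x s t) : ℤ) = nestedCount x s t := by
  induction x generalizing s t with
  | zero => rw [Nat.card_unique, nestedCount_zero, Nat.cast_one]
  | succ x ih =>
    rw [card_nestedPairs_succ, ← sum_sum_nestedCount x s t hts]
    push_cast
    refine sum_congr rfl fun u _ => sum_congr rfl fun v hv => ih u v ?_
    have := mem_range.mp hv
    omega

lemma nestedCount_self (x y : ℕ) :
    (y + 1 : ℚ) * nestedCount x y y = (x + y).choose y * (x + y + 1).choose y := by
  have h₁ := Nat.choose_succ_right_eq (x + y) y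
  have h₂ := Nat.choose_succ_right_eq (x + y) x
  have h₃ := Nat.choose_mul_succ_eq (x + y) y
  rw [Nat.add_sub_cancel] at h₁
  rw [Nat.add_sub_cancel_left, Nat.choose_symm_add] at h₂
  rw [show x + y + 1 - y = x + 1 by omega] at h₃
  qify at h₁ h₂ h₃
  rw [nestedCount, Nat.choose_symm_add]
  apply mul_left_cancel₀ (show (x + 1 : ℚ) ≠ 0 by positivity)
  push_cast
  linear_combination (-((x + y).choose (x + 1) * (x + 1) : ℚ)) * h₁
    - ((x + y).choose y * x : ℚ) * h₂ + ((x + y).choose y : ℚ) * h₃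

lemma prod_range_add_one_add (n k : ℕ) :
    ∏ i ∈ range k, ((n : ℚ) + 1 + i) = k.factorial * (n + k).choose k := by
  have h := congrArg (Nat.cast (R := ℚ)) (Nat.ascFactorial_eq_factorial_mul_choose n k)
  rw [Nat.ascFactorial_eq_prod_range] at h
  push_cast at h
  exact h

/-- The number of plane partitions fitting in an `x × y × 2` box equals
`((x+1)⋯(x+y) · (x+2)⋯(x+y+1)) / (y!·(y+1)!)`. -/
theorem card_planePartitions_height_two (x y : ℕ) :
    (Nat.card {f : ℕ → ℕ → ℕ // IsPP x y 2 f} : ℚ)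
      = (∏ i ∈ Finset.range y, ((x : ℚ) + 1 + i))
          * (∏ i ∈ Finset.range y, ((x : ℚ) + 2 + i))
          / ((y.factorial : ℚ) * ((y + 1).factorial : ℚ)) := by
  have hcard : (Nat.card {f // IsPP x y 2 f} : ℚ) = nestedCount x y y := by
    rw [Nat.card_congr (planePartitionEquiv x y)]
    exact_mod_cast card_nestedPairs x y y le_rfl
  have hshift : (x : ℚ) + 2 = ((x + 1 : ℕ) : ℚ) + 1 := by push_cast; ring
  rw [hcard, hshift, prod_range_add_one_add, prod_range_add_one_add, Nat.factorial_succ,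
    show x + 1 + y = x + y + 1 by omega, eq_div_iff (by positivity)]
  push_cast
  linear_combination (y.factorial : ℚ) ^ 2 * nestedCount_self x y
end
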